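/- Correctness of the reduction showing fallback voting resistant to destructive control by deleting candidates: let (C,V) be the fallback voting election obtained by Construction 1 from a Hitting Set instance (B,S,k). Then S has a hitting set of size at most k if and only if there exists a set D' ⊆ C − {c} with ||D'|| ≤ m − k such that c is not a unique FV winner of the restricted election (C − D', V). -/

import Mathlib

/-!
Fallback voting (Brams and Sanver).  A vote is represented by the list of the
candidates the voter approves of, in order of preference (most preferred
first); all candidates not occurring in the list are disapproved.  The voter
collection is a multiset of such votes.
-/

namespace FV

variable {α : Type} [DecidableEq α]

/-- The level-`i` score of candidate `c` in the election with votes `V`: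
the number of voters who approve of `c` and rank `c` among their top `i`
approved candidates. -/
def levelScore (V : Multiset (List α)) (i : ℕ) (c : α) : ℕ :=
  (V.filter (fun v => c ∈ v.take i)).card

/-- The approval score of candidate `c`: the number of voters approving of `c`. -/
def apprScore (V : Multiset (List α)) (c : α) : ℕ :=
  (V.filter (fun v => c ∈ v)).card

/-- Restriction of the votes to the candidate set `C`: each voter's approval
set and ranking are restricted to `C`. -/
def restrict (C : Finset α) (V : Multiset (List α)) : Multiset (List α) :=
  V.map (fun v => v.filter (fun x => decide (x ∈ C)))

instance instDecMaj (C : Finset α) (V : Multiset (List α)) :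
    DecidablePred (fun i =>
      i ∈ Finset.Icc 1 C.card ∧ ∃ c ∈ C, 2 * levelScore V i c > Multiset.card V) :=
  fun _ => inferInstance

/-- The set of fallback-voting winners of the election `(C,V)`:
if some level `i` with `1 ≤ i ≤ ‖C‖` exists at which some candidate of `C`
has a strict majority (level-`i` score exceeding `‖V‖/2`), then the winners
are the candidates with the largest level-`i₀` score, where `i₀` is the
smallest such level; otherwise the winners are the candidates with the largest
approval score. -/
def winners (C : Finset α) (V : Multiset (List α)) : Finset α :=
  if h : ∃ i, i ∈ Finset.Icc 1 C.card ∧ ∃ c ∈ C, 2 * levelScore V i c > Multiset.card V then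
    C.filter (fun c => ∀ d ∈ C, levelScore V (Nat.find h) d ≤ levelScore V (Nat.find h) c)
  else
    C.filter (fun c => ∀ d ∈ C, apprScore V d ≤ apprScore V c)

/-- The FV winners of the election `(C,V)` restricted to the candidate set `C`. -/
def fwinners (C : Finset α) (V : Multiset (List α)) : Finset α :=
  winners C (restrict C V)

end FV

/-! ### Construction 1 from a Hitting Set instance `(B, S, k)` -/

/-- Candidates of Construction 1: the elements of `B = {b_0, …, b_{m-1}}`
together with the three candidates `c`, `d`, and `w`. -/
inductive CandA (m : ℕ) where
  | b (j : Fin m)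
  | c
  | d
  | w
deriving DecidableEq

/-- The elements of a subset `T ⊆ B`, ranked according to the fixed linear
order on `B`. -/
def blistA {m : ℕ} (T : Finset (Fin m)) : List (CandA m) :=
  (T.sort (· ≤ ·)).map CandA.b

/-- The candidate set `C = B ∪ {c, d, w}` of Construction 1. -/
def CA (m : ℕ) : Finset (CandA m) :=
  (Finset.univ : Finset (Fin m)).image CandA.b ∪ {CandA.c, CandA.d, CandA.w}

/-- The voter collection of Construction 1:
`2m+1` voters `c | B∪{d,w}`; `2n+2k(n−1)+3` voters `c w | B∪{d}`;
`2n(k+1)+5` voters `w c | B∪{d}`; for each `i`, `2(k+1)` voters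
`d S_i c | (B−S_i)∪{w}`; for each `j`, two voters `d b_j w | (B−{b_j})∪{c}`;
and `2(k+1)` voters `d w c | B`. -/
def VA (m n k : ℕ) (S : Fin n → Finset (Fin m)) : Multiset (List (CandA m)) :=
  Multiset.replicate (2*m+1) [CandA.c] +
  Multiset.replicate (2*n + 2*k*(n-1) + 3) [CandA.c, CandA.w] +
  Multiset.replicate (2*n*(k+1) + 5) [CandA.w, CandA.c] +
  (∑ i : Fin n, Multiset.replicate (2*(k+1)) ([CandA.d] ++ blistA (S i) ++ [CandA.c])) +
  (∑ j : Fin m, Multiset.replicate 2 [CandA.d, CandA.b j, CandA.w]) +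
  Multiset.replicate (2*(k+1)) [CandA.d, CandA.w, CandA.c]

/-!
In every restriction that keeps `c`, candidate `c` has a strict majority at level 2 and no other
candidate has one at level 1, so the election is decided at level 1 (only possibly in favour of `c`)
or at level 2. When `c`, `d`, `w` all survive, the level-2 score of `c` exceeds that of `w` by
`2m + 1 - 2(k+1) - 2e + 2(k+1)u`, where `e` is the number of deleted elements of `B` and `u` the
number of sets `S_i` deleted entirely. Deleting the complement of a hitting set of size `k` gives
`e = m - k` and `u = 0`, so `w` beats `c`. Conversely, without a hitting set of size at most `k`,
either `u ≥ 1` or the surviving elements of `B` form a hitting set, so `e < m - k`; either way `c`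
beats `w`. If `d` is deleted, `c` gains the `d w c` voters at level 2 and still beats `w`.
-/

namespace List

theorem notMem_take_filter {α : Type*} {x : α} {l : List α} (h : x ∉ l) (p : α → Bool)
    (i : ℕ) : x ∉ (l.filter p).take i :=
  fun hx => h (mem_of_mem_filter (mem_of_mem_take hx))

theorem mem_take_one_append_singleton_iff {α : Type*} {x : α} {l : List α} (h : x ∉ l) :
    x ∈ (l ++ [x]).take 1 ↔ l = [] := by
  cases l <;> simp_all

end List

namespace Finset

theorem filter_forall_le_eq_singleton {α β : Type*} [LinearOrder β] {C : Finset α}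
    {f : α → β} {c : α} (hc : c ∈ C) (h : ∀ x ∈ C, x ≠ c → f x < f c) :
    C.filter (fun y => ∀ z ∈ C, f z ≤ f y) = {c} := by
  ext y
  simp only [mem_filter, mem_singleton]
  constructor
  · rintro ⟨hy, hmax⟩
    by_contra hyc
    exact (h y hy hyc).not_ge (hmax c hc)
  · rintro rfl
    refine ⟨hc, fun z hz => ?_⟩
    obtain rfl | hzy := eq_or_ne z y
    exacts [le_rfl, (h z hz hzy).le]

theorem notMem_filter_forall_le {α β : Type*} [LinearOrder β] {C : Finset α} {f : α → β}
    {c x : α} (hx : x ∈ C) (h : f c < f x) :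
    c ∉ C.filter (fun y => ∀ z ∈ C, f z ≤ f y) :=
  fun hc => h.not_ge ((mem_filter.1 hc).2 x hx)

end Finset

namespace FV

variable {α : Type} [DecidableEq α]

theorem levelScore_add (V W : Multiset (List α)) (i : ℕ) (x : α) :
    levelScore (V + W) i x = levelScore V i x + levelScore W i x := by
  simp only [levelScore, Multiset.filter_add, Multiset.card_add]

theorem levelScore_sum {ι : Type*} (s : Finset ι) (V : ι → Multiset (List α)) (i : ℕ)
    (x : α) :
    levelScore (∑ j ∈ s, V j) i x = ∑ j ∈ s, levelScore (V j) i x := by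
  simp only [levelScore, ← Multiset.countP_eq_card_filter]
  exact map_sum (Multiset.countPAddMonoidHom _) V s

theorem levelScore_replicate (r : ℕ) (v : List α) (i : ℕ) (x : α) :
    levelScore (Multiset.replicate r v) i x = if x ∈ v.take i then r else 0 := by
  split_ifs with h
  · rw [levelScore, Multiset.filter_eq_self.2 fun w hw => by rwa [Multiset.eq_of_mem_replicate hw],
      Multiset.card_replicate]
  · rw [levelScore, Multiset.filter_eq_nil.2 fun w hw => by rwa [Multiset.eq_of_mem_replicate hw]]
    rfl

theorem levelScore_sum_replicate {ι : Type*} (s : Finset ι) (r : ℕ) (v : ι → List α)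
    (i : ℕ) (x : α) :
    levelScore (∑ j ∈ s, Multiset.replicate r (v j)) i x =
      (s.filter fun j => x ∈ (v j).take i).card * r := by
  simp only [levelScore_sum, levelScore_replicate, Finset.sum_ite, Finset.sum_const_zero,
    add_zero, Finset.sum_const, smul_eq_mul]

theorem restrict_add (C : Finset α) (V W : Multiset (List α)) :
    restrict C (V + W) = restrict C V + restrict C W :=
  Multiset.map_add _ _ _

theorem restrict_sum {ι : Type*} (C : Finset α) (s : Finset ι) (V : ι → Multiset (List α)) :
    restrict C (∑ j ∈ s, V j) = ∑ j ∈ s, restrict C (V j) :=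
  map_sum (Multiset.mapAddMonoidHom _) V s

theorem restrict_replicate (C : Finset α) (r : ℕ) (v : List α) :
    restrict C (Multiset.replicate r v) = Multiset.replicate r (v.filter (· ∈ C)) :=
  Multiset.map_replicate _ _ _

theorem card_restrict (C : Finset α) (V : Multiset (List α)) :
    Multiset.card (restrict C V) = Multiset.card V :=
  Multiset.card_map _ _

def IsMajorityLevel (C : Finset α) (V : Multiset (List α)) (i : ℕ) : Prop :=
  i ∈ Finset.Icc 1 C.card ∧ ∃ c ∈ C, 2 * levelScore V i c > Multiset.card V

instance (C : Finset α) (V : Multiset (List α)) : DecidablePred (IsMajorityLevel C V) :=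
  instDecMaj C V

theorem exists_winners_eq_filter {C : Finset α} {V : Multiset (List α)} {i : ℕ}
    (hi : IsMajorityLevel C V i) :
    ∃ i₀ ≤ i, IsMajorityLevel C V i₀ ∧
      winners C V = C.filter fun c => ∀ d ∈ C, levelScore V i₀ d ≤ levelScore V i₀ c := by
  have h : ∃ i, IsMajorityLevel C V i := ⟨i, hi⟩
  exact ⟨Nat.find h, Nat.find_min' h hi, Nat.find_spec h, dif_pos h⟩

end FV

namespace Construction1

open FV Finset

variable {m : ℕ}

theorem two_mul_mul_sub_one_add {n : ℕ} (k : ℕ) (hn : 0 < n) :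
    2 * k * (n - 1) + 2 * k = 2 * k * n := by
  rw [← mul_add_one, Nat.sub_one_add_one hn.ne']

theorem mem_CA (x : CandA m) : x ∈ CA m := by
  cases x <;> simp [CA]

theorem card_CA : (CA m).card = m + 3 := by
  rw [CA, card_union_of_disjoint (by simp [disjoint_left]),
    card_image_of_injective _ fun _ _ => CandA.b.inj]
  simp

theorem filter_blistA_eq_nil_iff (C' : Finset (CandA m)) (T : Finset (Fin m)) :
    (blistA T).filter (· ∈ C') = [] ↔ ∀ j ∈ T, CandA.b j ∉ C' := by
  simp [blistA, List.filter_map]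

theorem w_notMem_take_filter_dVote (T : Finset (Fin m)) (p : CandA m → Bool) (i : ℕ) :
    CandA.w ∉ (([CandA.d] ++ blistA T ++ [CandA.c]).filter p).take i :=
  List.notMem_take_filter (by simp [blistA]) _ _

theorem c_mem_take_two_filter_dVote_iff {C' : Finset (CandA m)} (hc : CandA.c ∈ C')
    (hd : CandA.d ∈ C') (T : Finset (Fin m)) :
    CandA.c ∈ (([CandA.d] ++ blistA T ++ [CandA.c]).filter (· ∈ C')).take 2 ↔
      ∀ j ∈ T, CandA.b j ∉ C' := by
  have hcT : CandA.c ∉ (blistA T).filter (· ∈ C') :=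
    fun h => by simpa [blistA] using List.mem_of_mem_filter h
  simp only [List.filter_append, List.filter_singleton, hc, hd, decide_true, cond_true]
  rw [List.singleton_append, List.cons_append, List.take_succ_cons, List.mem_cons,
    List.mem_take_one_append_singleton_iff hcT, filter_blistA_eq_nil_iff]
  simp

variable (n k : ℕ) (S : Fin n → Finset (Fin m)) (C' : Finset (CandA m))

theorem card_VA (hn : 0 < n) : Multiset.card (VA m n k S) = 6 * n * (k + 1) + 4 * m + 11 := by
  simp only [VA, Multiset.card_add, Multiset.card_replicate, Multiset.card_sum, sum_const,
    card_univ, Fintype.card_fin, smul_eq_mul]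
  linarith [two_mul_mul_sub_one_add k hn]

theorem levelScore_restrict_VA (i : ℕ) (x : CandA m) :
    levelScore (restrict C' (VA m n k S)) i x =
      (if x ∈ ([CandA.c].filter (· ∈ C')).take i then 2*m+1 else 0) +
      (if x ∈ ([CandA.c, CandA.w].filter (· ∈ C')).take i then 2*n + 2*k*(n-1) + 3 else 0) +
      (if x ∈ ([CandA.w, CandA.c].filter (· ∈ C')).take i then 2*n*(k+1) + 5 else 0) +
      (univ.filter fun l =>
        x ∈ (([CandA.d] ++ blistA (S l) ++ [CandA.c]).filter (· ∈ C')).take i).card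
          * (2*(k+1)) +
      (univ.filter fun j =>
        x ∈ ([CandA.d, CandA.b j, CandA.w].filter (· ∈ C')).take i).card * 2 +
      (if x ∈ ([CandA.d, CandA.w, CandA.c].filter (· ∈ C')).take i then 2*(k+1) else 0) := by
  simp only [VA, restrict_add, restrict_sum, restrict_replicate, levelScore_add,
    levelScore_sum_replicate, levelScore_replicate]

local notation "score" => levelScore (restrict C' (VA m n k S))

theorem levelScore_le_of_ne_c_of_ne_w {x : CandA m} (hxc : x ≠ CandA.c) (hxw : x ≠ CandA.w)
    (i : ℕ) : score i x ≤ n * (2*(k+1)) + m * 2 + 2*(k+1) := by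
  have hS := card_le_univ (univ.filter fun l =>
    x ∈ (([CandA.d] ++ blistA (S l) ++ [CandA.c]).filter (· ∈ C')).take i)
  have hB := card_le_univ (univ.filter fun j =>
    x ∈ ([CandA.d, CandA.b j, CandA.w].filter (· ∈ C')).take i)
  rw [Fintype.card_fin] at hS hB
  rw [levelScore_restrict_VA, if_neg (List.notMem_take_filter (by simp [hxc]) _ _),
    if_neg (List.notMem_take_filter (by simp [hxc, hxw]) _ _),
    if_neg (List.notMem_take_filter (by simp [hxc, hxw]) _ _)]
  have := Nat.mul_le_mul_right (2*(k+1)) hS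
  split_ifs <;> omega

theorem levelScore_w_le (i : ℕ) :
    score i CandA.w ≤ (2*n + 2*k*(n-1) + 3) + (2*n*(k+1) + 5) + m * 2 + 2*(k+1) := by
  have hB := card_le_univ (univ.filter fun j =>
    CandA.w ∈ ([CandA.d, CandA.b j, CandA.w].filter (· ∈ C')).take i)
  rw [Fintype.card_fin] at hB
  rw [levelScore_restrict_VA, if_neg (List.notMem_take_filter (by simp) _ _)]
  simp only [w_notMem_take_filter_dVote, filter_false, card_empty]
  split_ifs <;> omega

theorem levelScore_one_w_le (hc : CandA.c ∈ C') :
    score 1 CandA.w ≤ (2*n*(k+1) + 5) + m * 2 + 2*(k+1) := by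
  have hB := card_le_univ (univ.filter fun j =>
    CandA.w ∈ ([CandA.d, CandA.b j, CandA.w].filter (· ∈ C')).take 1)
  rw [Fintype.card_fin] at hB
  rw [levelScore_restrict_VA, if_neg (List.notMem_take_filter (by simp) _ _),
    if_neg (show CandA.w ∉ ([CandA.c, CandA.w].filter (· ∈ C')).take 1 by simp [hc])]
  simp only [w_notMem_take_filter_dVote, filter_false, card_empty]
  split_ifs <;> omega

theorem levelScore_two_c_ge (hc : CandA.c ∈ C') :
    (2*m+1) + (2*n + 2*k*(n-1) + 3) + (2*n*(k+1) + 5) +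
      (if CandA.d ∈ C' then 0 else 2*(k+1)) ≤ score 2 CandA.c := by
  have hc₂ : ∀ v : List (CandA m), CandA.c ∈ v → (v.filter (· ∈ C')).length ≤ 2 →
      CandA.c ∈ (v.filter (· ∈ C')).take 2 := fun v hv hlen => by
    rw [List.take_of_length_le hlen]
    exact List.mem_filter.2 ⟨hv, by simpa using hc⟩
  have hlen : ∀ v : List (CandA m), v.length ≤ 2 → (v.filter (· ∈ C')).length ≤ 2 :=
    fun v hv => (List.length_filter_le _ _).trans hv
  rw [levelScore_restrict_VA, if_pos (hc₂ _ (by simp) (hlen _ (by simp))),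
    if_pos (hc₂ _ (by simp) (hlen _ (by simp))), if_pos (hc₂ _ (by simp) (hlen _ (by simp)))]
  by_cases hd : CandA.d ∈ C'
  · rw [if_pos hd]
    omega
  · rw [if_neg hd, if_pos (hc₂ _ (by simp) (by simpa [hd] using hlen [CandA.w, CandA.c] (by simp)))]
    omega

theorem levelScore_one_c (hc : CandA.c ∈ C') (hd : CandA.d ∈ C') (hw : CandA.w ∈ C') :
    score 1 CandA.c = (2*m+1) + (2*n + 2*k*(n-1) + 3) := by
  rw [levelScore_restrict_VA]
  simp [hc, hd, hw]

theorem levelScore_two_c (hc : CandA.c ∈ C') (hd : CandA.d ∈ C') (hw : CandA.w ∈ C') :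
    score 2 CandA.c = (2*m+1) + (2*n + 2*k*(n-1) + 3) + (2*n*(k+1) + 5) +
      (univ.filter fun l => ∀ j ∈ S l, CandA.b j ∉ C').card * (2*(k+1)) := by
  have hB : ∀ j, CandA.c ∉ ([CandA.d, CandA.b j, CandA.w].filter (· ∈ C')).take 2 :=
    fun j => List.notMem_take_filter (by simp) _ _
  rw [levelScore_restrict_VA]
  simp only [c_mem_take_two_filter_dVote_iff hc hd, hB, filter_false, card_empty]
  simp [hc, hd, hw]

theorem levelScore_two_w (hc : CandA.c ∈ C') (hd : CandA.d ∈ C') (hw : CandA.w ∈ C') :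
    score 2 CandA.w = (2*n + 2*k*(n-1) + 3) + (2*n*(k+1) + 5) +
      (univ.filter fun j => CandA.b j ∉ C').card * 2 + 2*(k+1) := by
  have hB : ∀ j, CandA.w ∈ ([CandA.d, CandA.b j, CandA.w].filter (· ∈ C')).take 2 ↔
      CandA.b j ∉ C' := by
    intro j
    by_cases hb : CandA.b j ∈ C' <;> simp [hb, hd, hw]
  rw [levelScore_restrict_VA]
  simp only [w_notMem_take_filter_dVote, hB, filter_false, card_empty]
  simp [hc, hd, hw]

theorem levelScore_two_w_lt_c (hc : CandA.c ∈ C') (hw : CandA.w ∈ C')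
    (hno : ∀ B' : Finset (Fin m), (∀ i, (B' ∩ S i).Nonempty) → k < B'.card) :
    score 2 CandA.w < score 2 CandA.c := by
  by_cases hd : CandA.d ∈ C'
  · rw [levelScore_two_w n k S C' hc hd hw, levelScore_two_c n k S C' hc hd hw]
    have hE := card_le_univ (univ.filter fun j => CandA.b j ∉ C')
    rw [Fintype.card_fin] at hE
    rcases Nat.eq_zero_or_pos (univ.filter fun l => ∀ j ∈ S l, CandA.b j ∉ C').card
      with hU | hU
    · have hhit : ∀ l, ((univ.filter fun j => CandA.b j ∈ C') ∩ S l).Nonempty := by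
        intro l
        obtain ⟨j, hjS, hjC'⟩ : ∃ j ∈ S l, CandA.b j ∈ C' := by
          simpa using filter_eq_empty_iff.1 (card_eq_zero.1 hU) (mem_univ l)
        exact ⟨j, mem_inter.2 ⟨mem_filter.2 ⟨mem_univ j, hjC'⟩, hjS⟩⟩
      have hsplit := card_filter_add_card_filter_not (s := (univ : Finset (Fin m)))
        (fun j => CandA.b j ∈ C')
      rw [card_univ, Fintype.card_fin] at hsplit
      have := hno _ hhit
      rw [hU]
      omega
    · nlinarith
  · have hc2 := levelScore_two_c_ge n k S C' hc
    have hw2 := levelScore_w_le n k S C' 2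
    rw [if_neg hd] at hc2
    omega

theorem levelScore_two_c_lt_w (hk : k ≤ m) (hc : CandA.c ∈ C') (hd : CandA.d ∈ C')
    (hw : CandA.w ∈ C') (hE : (univ.filter fun j => CandA.b j ∉ C').card = m - k)
    (hhit : ∀ l, ∃ j ∈ S l, CandA.b j ∈ C') :
    score 2 CandA.c < score 2 CandA.w := by
  have hU : (univ.filter fun l => ∀ j ∈ S l, CandA.b j ∉ C').card = 0 :=
    card_eq_zero.2 (filter_eq_empty_iff.2 fun l _ hl =>
      let ⟨j, hjS, hjC'⟩ := hhit l; hl j hjS hjC')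
  rw [levelScore_two_w n k S C' hc hd hw, levelScore_two_c n k S C' hc hd hw, hU, hE]
  omega

theorem two_mul_levelScore_one_le (hn : 2 ≤ n) (hc : CandA.c ∈ C') {x : CandA m}
    (hxc : x ≠ CandA.c) : 2 * score 1 x ≤ Multiset.card (restrict C' (VA m n k S)) := by
  rw [card_restrict, card_VA n k S (by omega)]
  by_cases hxw : x = CandA.w
  · have := levelScore_one_w_le n k S C' hc
    subst hxw
    nlinarith
  · have := levelScore_le_of_ne_c_of_ne_w n k S C' hxc hxw 1
    nlinarith

theorem card_lt_two_mul_levelScore_two_c (hn : 2 ≤ n) (hc : CandA.c ∈ C') :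
    Multiset.card (restrict C' (VA m n k S)) < 2 * score 2 CandA.c := by
  have := (Nat.le_add_right _ _).trans (levelScore_two_c_ge n k S C' hc)
  rw [card_restrict, card_VA n k S (by omega)]
  nlinarith [two_mul_mul_sub_one_add k (by omega : 0 < n)]

theorem isMajorityLevel_two (hn : 2 ≤ n) (hc : CandA.c ∈ C') (hC' : 2 ≤ C'.card) :
    IsMajorityLevel C' (restrict C' (VA m n k S)) 2 :=
  ⟨mem_Icc.2 ⟨one_le_two, hC'⟩, CandA.c, hc,
    card_lt_two_mul_levelScore_two_c n k S C' hn hc⟩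

theorem not_isMajorityLevel_one (hn : 2 ≤ n) (hc : CandA.c ∈ C') (hd : CandA.d ∈ C')
    (hw : CandA.w ∈ C') : ¬ IsMajorityLevel C' (restrict C' (VA m n k S)) 1 := by
  rintro ⟨-, x, -, hx⟩
  by_cases hxc : x = CandA.c
  · rw [hxc, levelScore_one_c n k S C' hc hd hw, card_restrict, card_VA n k S (by omega)] at hx
    nlinarith [two_mul_mul_sub_one_add k (by omega : 0 < n)]
  · exact (two_mul_levelScore_one_le n k S C' hn hc hxc).not_gt hx

theorem levelScore_two_lt_c (hn : 2 ≤ n) (hc : CandA.c ∈ C')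
    (hno : ∀ B' : Finset (Fin m), (∀ i, (B' ∩ S i).Nonempty) → k < B'.card)
    {x : CandA m} (hx : x ∈ C') (hxc : x ≠ CandA.c) : score 2 x < score 2 CandA.c := by
  by_cases hxw : x = CandA.w
  · exact hxw ▸ levelScore_two_w_lt_c n k S C' hc (hxw ▸ hx) hno
  · have := (Nat.le_add_right _ _).trans (levelScore_two_c_ge n k S C' hc)
    have := levelScore_le_of_ne_c_of_ne_w n k S C' hxc hxw 2
    nlinarith [two_mul_mul_sub_one_add k (by omega : 0 < n)]

theorem fwinners_VA_eq_singleton (hn : 2 ≤ n)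
    (hno : ∀ B' : Finset (Fin m), (∀ i, (B' ∩ S i).Nonempty) → k < B'.card)
    {D' : Finset (CandA m)} (hcD : CandA.c ∉ D') (hD' : D'.card ≤ m) :
    fwinners (CA m \ D') (VA m n k S) = {CandA.c} := by
  have hc : CandA.c ∈ CA m \ D' := mem_sdiff.2 ⟨mem_CA _, hcD⟩
  have hcard : 2 ≤ (CA m \ D').card := by
    have := le_card_sdiff D' (CA m)
    rw [card_CA] at this
    omega
  obtain ⟨i₀, hi₀, hmaj, hwin⟩ :=
    exists_winners_eq_filter (isMajorityLevel_two n k S _ hn hc hcard)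
  rw [fwinners, hwin]
  refine filter_forall_le_eq_singleton hc fun x hx hxc => ?_
  obtain rfl | rfl : i₀ = 1 ∨ i₀ = 2 := by
    have := (mem_Icc.1 hmaj.1).1
    omega
  · obtain ⟨y, -, hy⟩ := hmaj.2
    have hyc : y = CandA.c := by
      by_contra hyc
      exact (two_mul_levelScore_one_le n k S _ hn hc hyc).not_gt hy
    have := two_mul_levelScore_one_le n k S _ hn hc hxc
    rw [hyc] at hy
    omega
  · exact levelScore_two_lt_c n k S _ hn hc hno hx hxc

theorem c_notMem_fwinners_VA (hn : 2 ≤ n) (hk : k ≤ m) {B' : Finset (Fin m)}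
    (hB' : B'.card = k) (hhit : ∀ i, (B' ∩ S i).Nonempty) :
    CandA.c ∉ fwinners (CA m \ B'ᶜ.image CandA.b) (VA m n k S) := by
  set C' := CA m \ B'ᶜ.image CandA.b
  have hb : ∀ j, CandA.b j ∈ C' ↔ j ∈ B' := by simp [C', mem_CA]
  have hc : CandA.c ∈ C' := by simp [C', mem_CA]
  have hd : CandA.d ∈ C' := by simp [C', mem_CA]
  have hw : CandA.w ∈ C' := by simp [C', mem_CA]
  have hE : (univ.filter fun j => CandA.b j ∉ C').card = m - k := by
    simp only [hb, filter_not, filter_mem_eq_inter, univ_inter, ← compl_eq_univ_sdiff]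
    rw [card_compl, Fintype.card_fin, hB']
  have hcard : 2 ≤ C'.card := one_lt_card.2 ⟨_, hc, _, hw, by simp⟩
  obtain ⟨i₀, hi₀, hmaj, hwin⟩ :=
    exists_winners_eq_filter (isMajorityLevel_two n k S _ hn hc hcard)
  obtain rfl : i₀ = 2 := by
    obtain rfl | rfl : i₀ = 1 ∨ i₀ = 2 := by
      have := (mem_Icc.1 hmaj.1).1
      omega
    · exact absurd hmaj (not_isMajorityLevel_one n k S C' hn hc hd hw)
    · rfl
  rw [fwinners, hwin]
  refine notMem_filter_forall_le hw (levelScore_two_c_lt_w n k S C' hk hc hd hw hE fun l => ?_)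
  obtain ⟨j, hj⟩ := hhit l
  exact ⟨j, (mem_inter.1 hj).2, (hb j).2 (mem_inter.1 hj).1⟩

end Construction1

open Construction1 in
theorem fv_construction1_destructive_deleting_candidates_general
    (m n k : ℕ) (S : Fin n → Finset (Fin m))
    (hn : 1 < n) (hkm : k < m) :
    (∃ B' : Finset (Fin m), B'.card ≤ k ∧ ∀ i, (B' ∩ S i).Nonempty) ↔
    (∃ D' : Finset (CandA m), D' ⊆ (CA m).erase CandA.c ∧ D'.card ≤ m - k ∧
      FV.fwinners (CA m \ D') (VA m n k S) ≠ {CandA.c}) := by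
  constructor
  · rintro ⟨B₀, hB₀, hhit₀⟩
    obtain ⟨B', hB₀B', -, hB'⟩ :=
      Finset.exists_subsuperset_card_eq (Finset.subset_univ B₀) hB₀ (by simpa using hkm.le)
    refine ⟨B'ᶜ.image CandA.b, fun x hx => ?_, ?_, fun h => ?_⟩
    · obtain ⟨j, -, rfl⟩ := Finset.mem_image.1 hx
      exact Finset.mem_erase.2 ⟨by simp, mem_CA _⟩
    · exact Finset.card_image_le.trans (by simp [Finset.card_compl, hB'])
    · refine c_notMem_fwinners_VA n k S hn hkm.le hB' (fun i => ?_)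
        (h ▸ Finset.mem_singleton_self _)
      exact (hhit₀ i).mono (Finset.inter_subset_inter_right hB₀B')
  · rintro ⟨D', hD'c, hD', hne⟩
    by_contra hno
    refine hne (fwinners_VA_eq_singleton n k S hn (fun B' hB' => ?_)
      (fun h => (Finset.mem_erase.1 (hD'c h)).1 rfl) (hD'.trans (Nat.sub_le m k)))
    exact lt_of_not_ge fun hk => hno ⟨B', hk, hB'⟩

/-- Correctness of the reduction showing fallback voting resistant to
destructive control by deleting candidates: for the election `(C,V)` of
Construction 1 from a Hitting Set instance `(B,S,k)` (with `n > 1`,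
`0 < k < m`, and all `S_i` nonempty), `S` has a hitting set of size at most
`k` if and only if there is a set `D' ⊆ C − {c}` with `‖D'‖ ≤ m − k` such that
`c` is not a unique FV winner of the restricted election `(C − D', V)`. -/
theorem fv_construction1_destructive_deleting_candidates
    (m n k : ℕ) (S : Fin n → Finset (Fin m))
    (hn : 1 < n) (hk : 0 < k) (hkm : k < m) (hS : ∀ i, (S i).Nonempty) :
    (∃ B' : Finset (Fin m), B'.card ≤ k ∧ ∀ i, (B' ∩ S i).Nonempty) ↔
    (∃ D' : Finset (CandA m), D' ⊆ (CA m).erase CandA.c ∧ D'.card ≤ m - k ∧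
      FV.fwinners (CA m \ D') (VA m n k S) ≠ {CandA.c}) :=
  fv_construction1_destructive_deleting_candidates_general m n k S hn hkm
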